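/- Fix 0 < β ≤ 1, and let κ_β(x) = β/(β² − x²) and κ₁(x) = 1/(1 − x²). Then for every x ∈ (−1,1): (a) the series defining T_β κ_β(x) has only positive terms, converges, and T_β κ_β(x) = 1/(1 − x²); (b) 0 ≤ T_β κ₁(x) ≤ β/(1 − x²). In particular, for β = 1 one has T₁ κ₁ = κ₁, i.e., κ₁ is an invariant density (of infinite total mass) for the Gauss-type map x ↦ {−1/x} mod 2ℤ. -/

import Mathlib

open Real

/-- The subtransfer operator `T_β` of the Gauss-type map `x ↦ {-β/x} mod 2ℤ`. -/
noncomputable def Tsub (β : ℝ) (f : ℝ → ℝ) (x : ℝ) : ℝ :=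
  ∑' j : {j : ℤ // j ≠ 0},
    (β / (2 * ((j : ℤ) : ℝ) + x) ^ 2) * f (-β / (2 * ((j : ℤ) : ℝ) + x))

/-!
Writing `A = 2j + x`, the `j`-th term of `T_β κ_β (x)` simplifies to `1 / (A² - 1)` and that of
`T_β κ₁ (x)` to `β / (A² - β²) ≤ β / (A² - 1)`. Since `|A| > 1`, everything reduces to the identity
`∑_{j ≠ 0} 1 / ((2j + x)² - 1) = 1 / (1 - x²)`, which follows from the partial fractions
`1 / (A² - 1) = ½ (1 / (A - 1) - 1 / (A + 1))`: the sums over `j > 0` and `j < 0` telescope to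
`1 / (2 (1 + x))` and `1 / (2 (1 - x))`.
-/

open Filter Topology

lemma hasSum_sub_succ_of_antitone {u : ℕ → ℝ} {l : ℝ} (hu : Antitone u)
    (hl : Tendsto u atTop (𝓝 l)) : HasSum (fun n ↦ u n - u (n + 1)) (u 0 - l) := by
  rw [hasSum_iff_tendsto_nat_of_nonneg fun n ↦ sub_nonneg.mpr (hu n.le_succ)]
  simp only [Finset.sum_range_sub']
  exact tendsto_const_nhds.sub hl

lemma hasSum_one_div_sq_sub_one_nat {x : ℝ} (hx : -1 < x) :
    HasSum (fun n : ℕ ↦ 1 / ((2 * ((n : ℝ) + 1) + x) ^ 2 - 1)) (1 / (2 * (1 + x))) := by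
  set u : ℕ → ℝ := fun n ↦ 1 / (2 * (2 * n + 1 + x))
  have hpos (n : ℕ) : 0 < 2 * (n : ℝ) + 1 + x := by
    linarith [n.cast_nonneg (α := ℝ)]
  have hu : Antitone u := antitone_nat_of_succ_le fun n ↦ by
    refine one_div_le_one_div_of_le (by linarith [hpos n]) ?_
    push_cast
    linarith
  have hl : Tendsto u atTop (𝓝 0) := by
    refine tendsto_const_nhds.div_atTop (Tendsto.const_mul_atTop two_pos ?_)
    refine tendsto_atTop_add_const_right _ _ (tendsto_atTop_add_const_right _ _ ?_)
    exact tendsto_natCast_atTop_atTop.const_mul_atTop two_pos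
  convert hasSum_sub_succ_of_antitone hu hl using 1
  · ext n
    have h₀ := hpos n
    have h₁ := hpos (n + 1)
    simp only [u]
    push_cast at h₁ ⊢
    rw [show (2 * ((n : ℝ) + 1) + x) ^ 2 - 1 = (2 * n + 1 + x) * (2 * (n + 1) + 1 + x) by ring]
    field_simp
    ring
  · simp [u]

lemma hasSum_one_div_sq_sub_one {x : ℝ} (hx : x ∈ Set.Ioo (-1 : ℝ) 1) :
    HasSum (fun j : {j : ℤ // j ≠ 0} ↦ 1 / ((2 * ((j : ℤ) : ℝ) + x) ^ 2 - 1))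
      (1 / (1 - x ^ 2)) := by
  set f : ℤ → ℝ := fun j ↦ 1 / ((2 * (j : ℝ) + x) ^ 2 - 1)
  have hpos : HasSum (fun n : ℕ ↦ f (n + 1)) (1 / (2 * (1 + x))) := by
    convert hasSum_one_div_sq_sub_one_nat hx.1 using 1
    ext n
    simp [f]
  have hneg : HasSum (fun n : ℕ ↦ f (-(n + 1))) (1 / (2 * (1 - x))) := by
    convert hasSum_one_div_sq_sub_one_nat (x := -x) (by linarith [hx.2]) using 1
    · ext n
      simp only [f]
      push_cast
      ring
    · ring
  have hsplit : 1 / (2 * (1 + x)) + 1 / (2 * (1 - x)) = 1 / (1 - x ^ 2) := by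
    have : 1 + x ≠ 0 := by linarith [hx.1]
    have : 1 - x ≠ 0 := by linarith [hx.2]
    have : 1 - x ^ 2 ≠ 0 := by nlinarith [hx.1, hx.2]
    field_simp
    ring
  have hall := hpos.of_add_one_of_neg_add_one hneg
  rw [add_right_comm, hsplit, add_comm] at hall
  exact (hasSum_singleton 0 f).hasSum_compl_iff.mpr hall

lemma one_lt_sq_two_mul_add {j : ℤ} (hj : j ≠ 0) {x : ℝ} (hx : x ∈ Set.Ioo (-1 : ℝ) 1) :
    1 < (2 * (j : ℝ) + x) ^ 2 := by
  obtain ⟨hx₁, hx₂⟩ := hx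
  rcases hj.lt_or_gt with hj | hj
  · have : (j : ℝ) ≤ -1 := by exact_mod_cast Int.le_sub_one_of_lt hj
    nlinarith
  · have : (1 : ℝ) ≤ j := by exact_mod_cast hj
    nlinarith

lemma div_sq_mul_eq_one_div_sq_sub_one {β A : ℝ} (hβ : β ≠ 0) (hA : A ≠ 0) :
    β / A ^ 2 * (β / (β ^ 2 - (-β / A) ^ 2)) = 1 / (A ^ 2 - 1) := by
  field_simp

lemma div_sq_mul_eq_div_sq_sub_sq {β A : ℝ} (hA : A ≠ 0) :
    β / A ^ 2 * (1 / (1 - (-β / A) ^ 2)) = β / (A ^ 2 - β ^ 2) := by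
  rw [div_pow, neg_sq, one_sub_div (pow_ne_zero 2 hA)]
  field_simp

/-- `T_β κ_β = κ₁` (with positive terms, convergent series) and
`0 ≤ T_β κ₁ ≤ β κ₁`; in particular `κ₁` is an invariant density for `β = 1`. -/
theorem stmt_16 (β : ℝ) (hβ0 : 0 < β) (hβ1 : β ≤ 1) :
    ∀ x ∈ Set.Ioo (-1 : ℝ) 1,
      (∀ j : {j : ℤ // j ≠ 0},
        0 < (β / (2 * ((j : ℤ) : ℝ) + x) ^ 2) *
          (β / (β ^ 2 - (-β / (2 * ((j : ℤ) : ℝ) + x)) ^ 2))) ∧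
      Summable (fun j : {j : ℤ // j ≠ 0} =>
        (β / (2 * ((j : ℤ) : ℝ) + x) ^ 2) *
          (β / (β ^ 2 - (-β / (2 * ((j : ℤ) : ℝ) + x)) ^ 2))) ∧
      Tsub β (fun y => β / (β ^ 2 - y ^ 2)) x = 1 / (1 - x ^ 2) ∧
      0 ≤ Tsub β (fun y => 1 / (1 - y ^ 2)) x ∧
      Tsub β (fun y => 1 / (1 - y ^ 2)) x ≤ β / (1 - x ^ 2) ∧
      (β = 1 → Tsub β (fun y => 1 / (1 - y ^ 2)) x = 1 / (1 - x ^ 2)) := by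
  intro x hx
  have hA (j : {j : ℤ // j ≠ 0}) := one_lt_sq_two_mul_add j.2 hx
  have hA₀ (j : {j : ℤ // j ≠ 0}) : 2 * ((j : ℤ) : ℝ) + x ≠ 0 := by
    intro h
    have := hA j
    rw [h] at this
    norm_num at this
  have hsum := hasSum_one_div_sq_sub_one hx
  have hκβ (j : {j : ℤ // j ≠ 0}) := div_sq_mul_eq_one_div_sq_sub_one hβ0.ne' (hA₀ j)
  have hκ₁ (j : {j : ℤ // j ≠ 0}) := div_sq_mul_eq_div_sq_sub_sq (β := β) (hA₀ j)
  have hβ_sq : β ^ 2 ≤ 1 := pow_le_one₀ hβ0.le hβ1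
  have hκ₁_nonneg (j : {j : ℤ // j ≠ 0}) : 0 ≤ β / ((2 * ((j : ℤ) : ℝ) + x) ^ 2 - β ^ 2) :=
    div_nonneg hβ0.le (by linarith [hA j])
  have hκ₁_le (j : {j : ℤ // j ≠ 0}) : β / ((2 * ((j : ℤ) : ℝ) + x) ^ 2 - β ^ 2) ≤
      β * (1 / ((2 * ((j : ℤ) : ℝ) + x) ^ 2 - 1)) := by
    rw [mul_one_div]
    exact div_le_div_of_nonneg_left hβ0.le (by linarith [hA j]) (by linarith)
  have hκ₁_summable := (hsum.mul_left β).summable.of_nonneg_of_le hκ₁_nonneg hκ₁_le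
  refine ⟨fun j ↦ (hκβ j).symm ▸ one_div_pos.mpr (sub_pos.mpr (hA j)),
    hsum.summable.congr fun j ↦ (hκβ j).symm, ?_, ?_, ?_, ?_⟩
  · rw [Tsub, tsum_congr hκβ, hsum.tsum_eq]
  · rw [Tsub, tsum_congr hκ₁]
    exact tsum_nonneg hκ₁_nonneg
  · rw [Tsub, tsum_congr hκ₁, ← mul_one_div]
    exact hasSum_le hκ₁_le hκ₁_summable.hasSum (hsum.mul_left β)
  · rintro rfl
    rw [Tsub, tsum_congr hκ₁]
    simpa only [one_pow] using hsum.tsum_eq
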